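/- arXiv:2509.05812 — 2 statements merged into one kernel-verified Lean document; each statement's English description precedes it below -/
import Mathlib

section
/- For every integer d ≥ 1 and every vector of positive real numbers f(1), …, f(d) with f(1) + ⋯ + f(d) = 1, there exists a sequence v : ℕ → {1, …, d} such that v is ⌈log₂ d⌉-balanced and, for each letter i ∈ {1, …, d}, the letter i has frequency f(i) in v. (In particular, the balancedness threshold satisfies BT(d) ≤ ⌈log₂ d⌉.) -/
/-!
Split the alphabet into two parts of sizes `⌈d/2⌉` and `⌊d/2⌋`, of total weights `α` and `1 - α`.
By induction each part, with renormalized weights, has a `⌈log₂ ⌈d/2⌉⌉`-balanced sequence;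
interleave the two along the 1-balanced mechanical word of slope `α`. A window of the
interleaving reads a window of each part, and two windows of equal length read windows whose
lengths differ by at most one, so each halving costs one unit of balance, while frequencies
simply multiply.
-/

open Finset Filter Topology

/-- Number of occurrences of the letter `c` in the factor of `u` of length `n`
starting at position `i`, i.e. `#{t : i ≤ t < i+n, u t = c}`. -/
def cnt {A : Type*} [DecidableEq A] (u : ℕ → A) (c : A) (i n : ℕ) : ℕ :=
  ((Finset.Ico i (i + n)).filter (fun t => u t = c)).card

/-- A sequence `u` is `k`-balanced if the numbers of occurrences of any letter in
any two factors of the same length differ by at most `k`. -/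
def IsBalanced {A : Type*} [DecidableEq A] (k : ℕ) (u : ℕ → A) : Prop :=
  ∀ i j n : ℕ, ∀ c : A, ((cnt u c i n : ℤ) - (cnt u c j n : ℤ)).natAbs ≤ k

/-- The letter `c` has frequency `f` in the sequence `u`. -/
def HasFreq {A : Type*} [DecidableEq A] (u : ℕ → A) (c : A) (f : ℝ) : Prop :=
  Tendsto (fun n : ℕ => (cnt u c 0 n : ℝ) / n) atTop (𝓝 f)

section Counting

variable {A B : Type*} [DecidableEq A] [DecidableEq B]

@[simp]
lemma cnt_zero (u : ℕ → A) (c : A) (i : ℕ) : cnt u c i 0 = 0 := by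
  simp [cnt]

lemma cnt_succ (u : ℕ → A) (c : A) (i n : ℕ) :
    cnt u c i (n + 1) = cnt u c i n + if u (i + n) = c then 1 else 0 := by
  unfold cnt
  rw [← add_assoc, Nat.Ico_succ_right_eq_insert_Ico (Nat.le_add_right i n), filter_insert]
  split_ifs <;> simp [card_insert_of_notMem]

lemma cnt_add (u : ℕ → A) (c : A) (i m n : ℕ) :
    cnt u c i (m + n) = cnt u c i m + cnt u c (i + m) n := by
  induction n with
  | zero => simp
  | succ n ih => rw [← add_assoc, cnt_succ, cnt_succ, ih, add_assoc i m n, add_assoc]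

lemma cnt_le (u : ℕ → A) (c : A) (i n : ℕ) : cnt u c i n ≤ n :=
  (card_filter_le _ _).trans (by simp)

lemma cnt_const (a c : A) (i n : ℕ) : cnt (fun _ => a) c i n = if a = c then n else 0 := by
  unfold cnt
  split_ifs with h <;> simp [h]

lemma cnt_comp_of_injective {e : A → B} (he : Function.Injective e)
    (u : ℕ → A) (a : A) (i n : ℕ) : cnt (e ∘ u) (e a) i n = cnt u a i n := by
  simp [cnt, he.eq_iff]

lemma cnt_false_add_cnt_true (s : ℕ → Bool) (i n : ℕ) :
    cnt s false i n + cnt s true i n = n := by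
  induction n with
  | zero => simp
  | succ n ih => cases h : s (i + n) <;> simp [cnt_succ, h] <;> omega

lemma cnt_eq_cnt_of_cnt_zero_eq {v : ℕ → A} {u : ℕ → B} {s : ℕ → Bool} {a : A} {b : B} {β : Bool}
    (h : ∀ N, cnt v a 0 N = cnt u b 0 (cnt s β 0 N)) (i n : ℕ) :
    cnt v a i n = cnt u b (cnt s β 0 i) (cnt s β i n) := by
  have hv := cnt_add v a 0 i n
  rw [zero_add, h, h, cnt_add s β 0 i n, zero_add, cnt_add u b, zero_add] at hv
  omega

end Counting

section Balanced

variable {A : Type*} [DecidableEq A] {k : ℕ} {u : ℕ → A}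

lemma IsBalanced.mono {l : ℕ} (hu : IsBalanced k u) (hkl : k ≤ l) : IsBalanced l u :=
  fun i j n c => (hu i j n c).trans hkl

lemma isBalanced_const (a : A) : IsBalanced 0 (fun _ : ℕ => a) := by
  intro i j n c
  simp [cnt_const]

lemma IsBalanced.comp_equiv {B : Type*} [DecidableEq B] (hu : IsBalanced k u) (e : A ≃ B) :
    IsBalanced k (e ∘ u) := by
  intro i j n c
  obtain ⟨a, rfl⟩ := e.surjective c
  simpa only [cnt_comp_of_injective e.injective] using hu i j n a

lemma IsBalanced.natAbs_cnt_sub_cnt_le (hu : IsBalanced k u) (c : A) (i j m n : ℕ) :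
    ((cnt u c i m : ℤ) - cnt u c j n).natAbs ≤ k + ((m : ℤ) - n).natAbs := by
  wlog hmn : m ≤ n generalizing i j m n
  · have := this j i n m (by omega)
    omega
  obtain ⟨t, rfl⟩ := Nat.exists_eq_add_of_le hmn
  have := cnt_add u c j m t
  have := cnt_le u c (j + m) t
  have := hu i j m c
  omega

end Balanced

section MechanicalWord

/-- The lower mechanical word `⌊α (n+1)⌋ - ⌊α n⌋` of slope `α`, with `true` for the letter `1`. -/
noncomputable def mechanicalWord (α : ℝ) (n : ℕ) : Bool :=
  ⌊α * (n + 1)⌋₊ = ⌊α * n⌋₊ + 1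

variable {α : ℝ}

lemma cnt_mechanicalWord_true (h0 : 0 ≤ α) (h1 : α ≤ 1) (n : ℕ) :
    cnt (mechanicalWord α) true 0 n = ⌊α * n⌋₊ := by
  induction n with
  | zero => simp
  | succ n ih =>
    have hmono : ⌊α * n⌋₊ ≤ ⌊α * (n + 1)⌋₊ := Nat.floor_le_floor (by nlinarith)
    have hstep : ⌊α * (n + 1)⌋₊ ≤ ⌊α * n⌋₊ + 1 := by
      rw [← Nat.floor_add_one (by positivity)]
      exact Nat.floor_le_floor (by nlinarith)
    rw [cnt_succ, ih, zero_add, Nat.cast_succ]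
    by_cases h : ⌊α * (n + 1)⌋₊ = ⌊α * n⌋₊ + 1 <;> simp [mechanicalWord, h]; omega

lemma abs_cnt_mechanicalWord_true_sub_lt (h0 : 0 ≤ α) (h1 : α ≤ 1) (i n : ℕ) :
    |(cnt (mechanicalWord α) true i n : ℝ) - α * n| < 1 := by
  have hadd := cnt_add (mechanicalWord α) true 0 i n
  rw [zero_add, cnt_mechanicalWord_true h0 h1, cnt_mechanicalWord_true h0 h1] at hadd
  have hcnt : (cnt (mechanicalWord α) true i n : ℝ) = ⌊α * ↑(i + n)⌋₊ - ⌊α * i⌋₊ := by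
    rw [hadd]; push_cast; ring
  have := Nat.floor_le (a := α * ↑(i + n)) (by positivity)
  have := Nat.lt_floor_add_one (α * ↑(i + n))
  have := Nat.floor_le (a := α * i) (by positivity)
  have := Nat.lt_floor_add_one (α * i)
  push_cast at *
  rw [hcnt, abs_lt]
  constructor <;> linarith

lemma isBalanced_mechanicalWord (h0 : 0 ≤ α) (h1 : α ≤ 1) : IsBalanced 1 (mechanicalWord α) := by
  have htrue : ∀ i j n, ((cnt (mechanicalWord α) true i n : ℤ) -
      cnt (mechanicalWord α) true j n).natAbs ≤ 1 := by
    intro i j n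
    have hi := abs_cnt_mechanicalWord_true_sub_lt h0 h1 i n
    have hj := abs_cnt_mechanicalWord_true_sub_lt h0 h1 j n
    generalize cnt (mechanicalWord α) true i n = a at hi ⊢
    generalize cnt (mechanicalWord α) true j n = b at hj ⊢
    rw [abs_lt] at hi hj
    have hab : ((a : ℤ) : ℝ) < b + 2 := by push_cast; linarith
    have hba : ((b : ℤ) : ℝ) < a + 2 := by push_cast; linarith
    have : (a : ℤ) < b + 2 := by exact_mod_cast hab
    have : (b : ℤ) < a + 2 := by exact_mod_cast hba
    omega
  intro i j n c
  cases c
  · have := cnt_false_add_cnt_true (mechanicalWord α) i n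
    have := cnt_false_add_cnt_true (mechanicalWord α) j n
    have := htrue i j n
    omega
  · exact htrue i j n

lemma hasFreq_mechanicalWord_true (h0 : 0 ≤ α) (h1 : α ≤ 1) :
    HasFreq (mechanicalWord α) true α := by
  simp only [HasFreq, cnt_mechanicalWord_true h0 h1]
  exact (tendsto_nat_floor_mul_div_atTop h0).comp tendsto_natCast_atTop_atTop

lemma HasFreq.false_of_true {s : ℕ → Bool} (h : HasFreq s true α) : HasFreq s false (1 - α) := by
  refine ((tendsto_const_nhds (x := (1 : ℝ))).sub h).congr' ?_
  filter_upwards [eventually_ne_atTop 0] with n hn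
  have : (n : ℝ) = cnt s false 0 n + cnt s true 0 n := by
    exact_mod_cast (cnt_false_add_cnt_true s 0 n).symm
  field_simp
  linarith

end MechanicalWord

section Frequency

variable {A B : Type*} [DecidableEq A] [DecidableEq B] {γ g : ℝ}

lemma hasFreq_const (a : A) : HasFreq (fun _ : ℕ => a) a 1 := by
  simp only [HasFreq, cnt_const, if_true]
  refine tendsto_const_nhds.congr' ?_
  filter_upwards [eventually_ne_atTop 0] with n hn
  field_simp

lemma HasFreq.comp_injective {e : A → B} (he : Function.Injective e) {u : ℕ → A} {a : A}
    (h : HasFreq u a g) : HasFreq (e ∘ u) (e a) g := by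
  simpa only [HasFreq, cnt_comp_of_injective he] using h

lemma HasFreq.of_cnt_eq_cnt_comp {v : ℕ → A} {u : ℕ → B} {a : A} {b : B} {T : ℕ → ℕ}
    (hu : HasFreq u b g) (hT : Tendsto (fun n => (T n : ℝ) / n) atTop (𝓝 γ)) (hγ : 0 < γ)
    (hvu : ∀ N, cnt v a 0 N = cnt u b 0 (T N)) : HasFreq v a (g * γ) := by
  have hT_atTop : Tendsto T atTop atTop :=
    tendsto_natCast_atTop_iff.mp (tendsto_natCast_atTop_atTop.num hγ hT)
  refine ((hu.comp hT_atTop).mul hT).congr fun n => ?_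
  simp only [Function.comp_apply, hvu]
  rcases Nat.eq_zero_or_pos (T n) with h | h
  · simp [h]
  · rw [div_mul_div_cancel₀ (by positivity)]

end Frequency

section Merge

variable {B C : Type*} [DecidableEq B] [DecidableEq C] {s : ℕ → Bool} {u₁ : ℕ → B}
    {u₂ : ℕ → C}

def merge (s : ℕ → Bool) (u₁ : ℕ → B) (u₂ : ℕ → C) (n : ℕ) : B ⊕ C :=
  if s n then .inl (u₁ (cnt s true 0 n)) else .inr (u₂ (cnt s false 0 n))

lemma cnt_merge_inl_zero (b : B) (N : ℕ) :
    cnt (merge s u₁ u₂) (.inl b) 0 N = cnt u₁ b 0 (cnt s true 0 N) := by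
  induction N with
  | zero => simp
  | succ N ih => cases h : s N <;> simp [cnt_succ, ih, merge, h]

lemma cnt_merge_inr_zero (c : C) (N : ℕ) :
    cnt (merge s u₁ u₂) (.inr c) 0 N = cnt u₂ c 0 (cnt s false 0 N) := by
  induction N with
  | zero => simp
  | succ N ih => cases h : s N <;> simp [cnt_succ, ih, merge, h]

lemma IsBalanced.merge {k : ℕ} (hs : IsBalanced 1 s) (hu₁ : IsBalanced k u₁)
    (hu₂ : IsBalanced k u₂) : IsBalanced (k + 1) (merge s u₁ u₂) := by
  intro i j n x
  rcases x with b | c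
  · rw [cnt_eq_cnt_of_cnt_zero_eq (cnt_merge_inl_zero b),
      cnt_eq_cnt_of_cnt_zero_eq (cnt_merge_inl_zero b)]
    exact (hu₁.natAbs_cnt_sub_cnt_le b _ _ _ _).trans (by have := hs i j n true; omega)
  · rw [cnt_eq_cnt_of_cnt_zero_eq (cnt_merge_inr_zero c),
      cnt_eq_cnt_of_cnt_zero_eq (cnt_merge_inr_zero c)]
    exact (hu₂.natAbs_cnt_sub_cnt_le c _ _ _ _).trans (by have := hs i j n false; omega)

lemma HasFreq.merge_inl {α g : ℝ} {b : B} (hu₁ : HasFreq u₁ b g) (hs : HasFreq s true α)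
    (hα : 0 < α) : HasFreq (merge s u₁ u₂) (.inl b) (g * α) :=
  hu₁.of_cnt_eq_cnt_comp hs hα (cnt_merge_inl_zero b)

lemma HasFreq.merge_inr {α g : ℝ} {c : C} (hu₂ : HasFreq u₂ c g) (hs : HasFreq s false α)
    (hα : 0 < α) : HasFreq (merge s u₁ u₂) (.inr c) (g * α) :=
  hu₂.of_cnt_eq_cnt_comp hs hα (cnt_merge_inr_zero c)

end Merge

/-- `BalancedRealizable k A` says `BT(card A) ≤ k`. -/
def BalancedRealizable (k : ℕ) (A : Type*) [Fintype A] [DecidableEq A] : Prop :=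
  ∀ f : A → ℝ, (∀ a, 0 < f a) → ∑ a, f a = 1 → ∃ v : ℕ → A, IsBalanced k v ∧ ∀ a, HasFreq v a (f a)

namespace BalancedRealizable

variable {A : Type*} [Fintype A] [DecidableEq A] {k : ℕ}

lemma mono {l : ℕ} (h : BalancedRealizable k A) (hkl : k ≤ l) : BalancedRealizable l A := by
  intro f hpos hsum
  obtain ⟨v, hbal, hfreq⟩ := h f hpos hsum
  exact ⟨v, hbal.mono hkl, hfreq⟩

lemma of_subsingleton [Subsingleton A] : BalancedRealizable 0 A := by
  intro f _ hsum
  obtain ⟨a⟩ : Nonempty A := by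
    by_contra h
    rw [not_nonempty_iff] at h
    simp at hsum
  refine ⟨fun _ => a, isBalanced_const a, fun x => ?_⟩
  rw [Subsingleton.elim x a, ← Fintype.sum_subsingleton f a, hsum]
  exact hasFreq_const a

lemma of_sumCompl (p : A → Prop) [DecidablePred p] (hp : ∃ a, p a) (hnp : ∃ a, ¬p a)
    (h₁ : BalancedRealizable k {a // p a}) (h₂ : BalancedRealizable k {a // ¬p a}) :
    BalancedRealizable (k + 1) A := by
  intro f hpos hsum
  set α := ∑ a : {a // p a}, f a
  have hβ : ∑ a : {a // ¬p a}, f a = 1 - α := by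
    rw [← hsum, ← Fintype.sum_subtype_add_sum_subtype p f]; ring
  have hα0 : 0 < α := by
    obtain ⟨a, ha⟩ := hp
    exact Finset.sum_pos (fun a _ => hpos a) ⟨⟨a, ha⟩, mem_univ _⟩
  have hα1 : 0 < 1 - α := by
    obtain ⟨a, ha⟩ := hnp
    exact hβ ▸ Finset.sum_pos (fun a _ => hpos a) ⟨⟨a, ha⟩, mem_univ _⟩
  obtain ⟨u₁, hbal₁, hfreq₁⟩ := h₁ (fun a => f a / α) (fun a => div_pos (hpos a) hα0)
    (by rw [← Finset.sum_div, div_self hα0.ne'])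
  obtain ⟨u₂, hbal₂, hfreq₂⟩ := h₂ (fun a => f a / (1 - α)) (fun a => div_pos (hpos a) hα1)
    (by rw [← Finset.sum_div, hβ, div_self hα1.ne'])
  have hs := hasFreq_mechanicalWord_true hα0.le (by linarith)
  refine ⟨Equiv.sumCompl p ∘ merge (mechanicalWord α) u₁ u₂,
    ((isBalanced_mechanicalWord hα0.le (by linarith)).merge hbal₁ hbal₂).comp_equiv _,
    fun a => ?_⟩
  by_cases ha : p a
  · have := ((hfreq₁ ⟨a, ha⟩).merge_inl (u₂ := u₂) hs hα0).comp_injective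
      (Equiv.sumCompl p).injective
    rwa [div_mul_cancel₀ _ hα0.ne'] at this
  · have := ((hfreq₂ ⟨a, ha⟩).merge_inr (u₁ := u₁) hs.false_of_true hα1).comp_injective
      (Equiv.sumCompl p).injective
    rwa [div_mul_cancel₀ _ hα1.ne'] at this

end BalancedRealizable

theorem balancedRealizable_clog_card (A : Type*) [Fintype A] [DecidableEq A] :
    BalancedRealizable (Nat.clog 2 (Fintype.card A)) A := by
  induction hd : Fintype.card A using Nat.strong_induction_on generalizing A with
  | _ d ih =>
  rcases Nat.lt_or_ge d 2 with hd2 | hd2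
  · have : Subsingleton A := Fintype.card_le_one_iff_subsingleton.mp (by omega)
    rw [Nat.clog_of_right_le_one (by omega)]
    exact .of_subsingleton
  obtain ⟨S, -, hS⟩ := exists_subset_card_eq (s := (univ : Finset A)) (n := (d + 1) / 2)
    (by rw [card_univ]; omega)
  have h₁ : Fintype.card {a // a ∈ S} = (d + 1) / 2 := by rw [Fintype.card_coe, hS]
  have h₂ : Fintype.card {a // a ∉ S} = d - (d + 1) / 2 := by
    rw [Fintype.card_subtype_compl, h₁, hd]
  rw [Nat.clog_of_two_le one_lt_two hd2, show (d + 2 - 1) / 2 = (d + 1) / 2 by omega]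
  refine .of_sumCompl (· ∈ S) ?_ ?_ ?_ ?_
  · exact card_pos.mp (by omega)
  · by_contra! hS_univ
    rw [eq_univ_of_forall hS_univ, card_univ] at hS
    omega
  -- `convert` reconciles two propositionally equal `Fintype` instances on the subtypes.
  · convert ih _ (by omega) {a // a ∈ S} h₁
  · have hm : d - (d + 1) / 2 ≤ (d + 1) / 2 := by omega
    convert (ih _ (by omega) {a // a ∉ S} h₂).mono (Nat.clog_mono_right 2 hm)

theorem freq_of_balanced_exists_general (d : ℕ) (f : Fin d → ℝ)
    (hpos : ∀ i, 0 < f i) (hsum : ∑ i, f i = 1) :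
    ∃ v : ℕ → Fin d, IsBalanced (Nat.clog 2 d) v ∧ ∀ i, HasFreq v i (f i) := by
  simpa using balancedRealizable_clog_card (Fin d) f hpos hsum

/-- For every `d ≥ 1` and every positive vector `f` summing to `1`, there is a
`⌈log₂ d⌉`-balanced sequence over a `d`-letter alphabet whose letter frequencies
are given by `f`; in particular `BT(d) ≤ ⌈log₂ d⌉`. -/
theorem freq_of_balanced_exists (d : ℕ) (hd : 1 ≤ d) (f : Fin d → ℝ)
    (hpos : ∀ i, 0 < f i) (hsum : ∑ i, f i = 1) :
    ∃ v : ℕ → Fin d, IsBalanced (Nat.clog 2 d) v ∧ ∀ i, HasFreq v i (f i) :=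
  freq_of_balanced_exists_general d f hpos hsum
end

section
/- Let u be a sequence over {a, b} in which the letter a has frequency f_a ∈ (0, 1), and let 𝐚 : ℕ → 𝒜 and 𝐛 : ℕ → ℬ be sequences over disjoint alphabets such that a letter j ∈ 𝒜 has frequency γ in 𝐚. Then the letter j has frequency f_a · γ in the colouring v = colour(u, 𝐚, 𝐛). -/
open Finset Filter Topology

/-- Colouring of a binary sequence `u` (letter `a` is `true`, letter `b` is `false`)
by a sequence `va` over `A` and a sequence `vb` over `B` (disjoint alphabets,
realized as the two summands of `A ⊕ B`): the `n`-th occurrence of `a` in `u`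
is replaced by `va n`, and the `n`-th occurrence of `b` by `vb n`. -/
def colour {A B : Type*} (u : ℕ → Bool) (va : ℕ → A) (vb : ℕ → B) (N : ℕ) : A ⊕ B :=
  if u N then Sum.inl (va (cnt u true 0 N)) else Sum.inr (vb (cnt u false 0 N))

/-! The occurrences of `j` in `colour u 𝐚 𝐛` before `N` are exactly those of `j` in `𝐚` before
`m = #{i < N : u i = a}`, so their proportion is `(cnt 𝐚 j m / m) · (m / N) → γ · f_a`;
`m → ∞` because `f_a > 0`. -/

section Counting

variable {A : Type*} [DecidableEq A]

lemma cnt_zero_succ (u : ℕ → A) (c : A) (n : ℕ) :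
    cnt u c 0 (n + 1) = cnt u c 0 n + if u n = c then 1 else 0 := by
  simp only [cnt, zero_add]
  rw [Nat.Ico_zero_eq_range, Finset.range_add_one, Finset.filter_insert]
  split
  · rw [Finset.card_insert_of_notMem (by simp), Nat.Ico_zero_eq_range]
  · simp

lemma HasFreq.tendsto_cnt_atTop {u : ℕ → A} {c : A} {f : ℝ} (hu : HasFreq u c f) (hf : 0 < f) :
    Tendsto (cnt u c 0) atTop atTop := by
  have hprod : Tendsto (fun n : ℕ => (cnt u c 0 n : ℝ) / n * n) atTop atTop :=
    hu.pos_mul_atTop hf tendsto_natCast_atTop_atTop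
  refine tendsto_natCast_atTop_iff.mp (hprod.congr' ?_)
  filter_upwards [eventually_gt_atTop 0] with n hn
  field_simp

lemma HasFreq.tendsto_cnt_comp_div {v : ℕ → A} {c : A} {γ f : ℝ} (hv : HasFreq v c γ)
    {m : ℕ → ℕ} (hm : Tendsto (fun n => (m n : ℝ) / n) atTop (𝓝 f))
    (hm_atTop : Tendsto m atTop atTop) :
    Tendsto (fun n => (cnt v c 0 (m n) : ℝ) / n) atTop (𝓝 (γ * f)) := by
  refine ((hv.comp hm_atTop).mul hm).congr fun n => ?_
  rcases eq_or_ne (m n) 0 with h | h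
  · simp [h, cnt]
  · simp only [Function.comp_apply]
    rw [div_mul_div_comm, mul_comm (m n : ℝ), mul_div_mul_right _ _ (by exact_mod_cast h)]

end Counting

lemma cnt_colour_inl {A B : Type*} [DecidableEq A] [DecidableEq B]
    (u : ℕ → Bool) (va : ℕ → A) (vb : ℕ → B) (j : A) (n : ℕ) :
    cnt (colour u va vb) (Sum.inl j) 0 n = cnt va j 0 (cnt u true 0 n) := by
  induction n with
  | zero => simp [cnt]
  | succ n ih =>
    rw [cnt_zero_succ, cnt_zero_succ u true, ih]
    cases hn : u n with
    | false => simp [colour, hn]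
    | true => simp [colour, hn, cnt_zero_succ va]

/-- If the letter `a` (i.e. `true`) has frequency `f_a ∈ (0,1)` in `u` and the
letter `j` has frequency `γ` in `va`, then `j` has frequency `f_a·γ` in
`colour(u, va, vb)`. -/
theorem colour_letter_freq {A B : Type*} [DecidableEq A] [DecidableEq B]
    (u : ℕ → Bool) (va : ℕ → A) (vb : ℕ → B)
    (fa γ : ℝ) (hfa : fa ∈ Set.Ioo (0 : ℝ) 1) (hu : HasFreq u true fa)
    (j : A) (hj : HasFreq va j γ) :
    HasFreq (colour u va vb) (Sum.inl j) (fa * γ) := by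
  rw [HasFreq, mul_comm]
  simp only [cnt_colour_inl]
  exact hj.tendsto_cnt_comp_div hu (hu.tendsto_cnt_atTop hfa.1)
end
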